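/- arXiv:quant-ph/0103155 — 4 statements merged into one kernel-verified Lean document; each statement's English description precedes it below -/
import Mathlib

section
/- A density operator ρ is a convex combination of unitary conjugates of a density operator σ (i.e., ρ = Σ_i p_i U_i σ U_i† with p_i ≥ 0 summing to 1 and U_i unitary) if and only if the decreasingly ordered eigenvalue vector of ρ is majorized by that of σ. -/
open scoped ComplexOrder Matrix

noncomputable def sortedDesc {d : ℕ} (v : Fin d → ℝ) : Fin d → ℝ :=
  fun i => (v ∘ Tuple.sort v) (Fin.rev i)

def psum {d : ℕ} (v : Fin d → ℝ) (k : ℕ) : ℝ :=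
  ∑ i : Fin d, if (i : ℕ) < k then v i else 0

/-- μ majorizes lam. -/
def Majorizes {d : ℕ} (μ lam : Fin d → ℝ) : Prop :=
  (∀ k : ℕ, psum (sortedDesc lam) k ≤ psum (sortedDesc μ) k) ∧
    (∑ i, lam i = ∑ i, μ i)

/-!
If `ρ = ∑ pᵢ Uᵢ σ Uᵢᴴ` and `V`, `W` diagonalize `ρ`, `σ`, then reading off the diagonal of
`Vᴴ ρ V` shows that the eigenvalue vector of `ρ` is `B` applied to that of `σ`, where
`B = ∑ pᵢ |Vᴴ Uᵢ W|²` (entrywise) is doubly stochastic because each `Vᴴ Uᵢ W` is unitary; and a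
doubly stochastic matrix can only shrink the partial sums of the decreasingly sorted vector. Conversely, if `x` is majorized by `y` but is not in the convex hull of the
permutations of `y`, a separating functional `c` has `⟨c, x⟩ > maxπ ⟨c, y ∘ π⟩ = ⟨c↓, y↓⟩`, while
rearrangement and Abel summation give `⟨c, x⟩ ≤ ⟨c↓, x↓⟩ ≤ ⟨c↓, y↓⟩`. Since permuting the
eigenvalues of `σ` is conjugation by a unitary, a convex combination of permuted eigenvalue
vectors of `σ` yields a convex combination of unitary conjugates of `σ`.
-/

open Finset Matrix

section Majorization

variable {d : ℕ}

noncomputable def sortPerm (v : Fin d → ℝ) : Equiv.Perm (Fin d) :=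
  Fin.revPerm.trans (Tuple.sort v)

lemma sortedDesc_eq_comp (v : Fin d → ℝ) : sortedDesc v = v ∘ sortPerm v := rfl

lemma antitone_sortedDesc (v : Fin d → ℝ) : Antitone (sortedDesc v) :=
  fun _ _ hij => Tuple.monotone_sort v (Fin.rev_le_rev.2 hij)

lemma sum_sortedDesc (v : Fin d → ℝ) : ∑ i, sortedDesc v i = ∑ i, v i :=
  Equiv.sum_comp (sortPerm v) v

lemma psum_eq_sum_filter (v : Fin d → ℝ) (k : ℕ) :
    psum v k = ∑ i ∈ univ.filter (fun i : Fin d => (i : ℕ) < k), v i :=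
  (sum_filter _ _).symm

lemma psum_eq_sum_of_le (v : Fin d → ℝ) {k : ℕ} (hk : d ≤ k) : psum v k = ∑ i, v i :=
  sum_congr rfl fun i _ => if_pos (i.isLt.trans_le hk)

lemma psum_zero (v : Fin d → ℝ) : psum v 0 = 0 := by
  simp [psum]

lemma psum_succ_sub_psum (v : Fin d → ℝ) (i : Fin d) : psum v (i + 1) - psum v i = v i := by
  rw [psum, psum, ← sum_sub_distrib, sum_eq_single i]
  · simp
  · intro j _ hj
    have : (j : ℕ) ≠ i := Fin.val_ne_of_ne hj
    split_ifs <;> first | (exfalso; omega) | ring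
  · simp

lemma sum_mul_le_psum_of_antitone {w : Fin d → ℝ} (hw : Antitone w) {c : Fin d → ℝ}
    (hc0 : ∀ i, 0 ≤ c i) (hc1 : ∀ i, c i ≤ 1) {m : ℕ} (hm : m ≤ d) (hc : ∑ i, c i = m) :
    ∑ i, c i * w i ≤ psum w m := by
  rcases Nat.eq_zero_or_pos d with rfl | hd
  · simp [psum]
  -- `t` separates the first `m` values of `w` from the remaining ones
  set t := w ⟨m - 1, by omega⟩
  set χ : Fin d → ℝ := fun i => if (i : ℕ) < m then 1 else 0
  have hχ : ∑ i, χ i = m := by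
    rw [sum_boole, Fin.card_filter_val_lt, min_eq_right hm]
  have key : ∀ i, c i * w i ≤ (c i - χ i) * t + if (i : ℕ) < m then w i else 0 := by
    intro i
    simp only [χ]
    split_ifs with hi
    · have : t ≤ w i := hw (Fin.le_iff_val_le_val.2 (show (i : ℕ) ≤ m - 1 by omega))
      nlinarith [hc1 i]
    · have : w i ≤ t := hw (Fin.le_iff_val_le_val.2 (show m - 1 ≤ (i : ℕ) by omega))
      nlinarith [hc0 i]
  calc ∑ i, c i * w i ≤ ∑ i, ((c i - χ i) * t + if (i : ℕ) < m then w i else 0) :=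
        sum_le_sum fun i _ => key i
    _ = psum w m := by
        rw [sum_add_distrib, ← sum_mul, sum_sub_distrib, hc, hχ, sub_self, zero_mul, zero_add,
          psum]

lemma majorizes_mulVec_of_mem_doublyStochastic {B : Matrix (Fin d) (Fin d) ℝ}
    (hB : B ∈ doublyStochastic ℝ (Fin d)) (y : Fin d → ℝ) : Majorizes y (B *ᵥ y) := by
  have hsum : ∑ i, (B *ᵥ y) i = ∑ i, y i := sum_mulVec_of_mem_doublyStochastic hB
  refine ⟨fun k => ?_, hsum⟩
  rcases le_total d k with hk | hk
  · rw [psum_eq_sum_of_le _ hk, psum_eq_sum_of_le _ hk, sum_sortedDesc, sum_sortedDesc, hsum]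
  -- the weights that the rows carrying the `k` largest entries of `B *ᵥ y` put on `y`
  set T := ({i : Fin d | (i : ℕ) < k} : Finset _).map (sortPerm (B *ᵥ y)).toEmbedding
  set c : Fin d → ℝ := fun l => ∑ j ∈ T, B j l
  have hc0 : ∀ l, 0 ≤ c l := fun l => sum_nonneg fun j _ => nonneg_of_mem_doublyStochastic hB
  have hc1 : ∀ l, c l ≤ 1 := fun l =>
    (sum_le_sum_of_subset_of_nonneg (subset_univ T) fun j _ _ =>
      nonneg_of_mem_doublyStochastic hB).trans_eq (sum_col_of_mem_doublyStochastic hB l)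
  have hc : ∑ l, c l = k := by
    rw [sum_comm, sum_congr rfl fun j _ => sum_row_of_mem_doublyStochastic hB j]
    simp [T, Fin.card_filter_val_lt, hk]
  calc psum (sortedDesc (B *ᵥ y)) k = ∑ j ∈ T, (B *ᵥ y) j := by
        rw [psum_eq_sum_filter, sum_map]; rfl
    _ = ∑ l, c l * y l := by
        simp only [mulVec, dotProduct, c, sum_mul]
        exact sum_comm
    _ = ∑ i, c (sortPerm y i) * sortedDesc y i := (Equiv.sum_comp (sortPerm y) _).symm
    _ ≤ psum (sortedDesc y) k :=
        sum_mul_le_psum_of_antitone (antitone_sortedDesc y) (fun _ => hc0 _) (fun _ => hc1 _) hk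
          (by rw [Equiv.sum_comp, hc])

lemma sum_mul_le_sum_mul_of_psum_le {a x y : Fin d → ℝ} (ha : Antitone a)
    (hxy : ∀ k, psum x k ≤ psum y k) (hsum : ∑ i, x i = ∑ i, y i) :
    ∑ i, a i * x i ≤ ∑ i, a i * y i := by
  obtain _ | m := d
  · simp
  set A : ℕ → ℝ := fun k => a (Fin.clamp k m)
  set S : ℕ → ℝ := fun k => psum y k - psum x k
  have hA : Antitone A := fun k l hkl => ha (Fin.clamp_monotone hkl)
  have hS0 : S 0 = 0 := by simp [S, psum_zero]
  have hSd : S (m + 1) = 0 := by simp [S, psum_eq_sum_of_le, hsum]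
  have habel : ∑ i ∈ range (m + 1), A i * (S (i + 1) - S i)
      = ∑ i ∈ range (m + 1), (A i - A (i + 1)) * S (i + 1) := by
    have htel := sum_range_sub (fun i => A i * S i) (m + 1)
    simp only [hS0, hSd, mul_zero, sub_zero] at htel
    rw [← sub_eq_zero, ← sum_sub_distrib, ← htel]
    exact sum_congr rfl fun i _ => by ring
  have hterm : ∀ i : Fin (m + 1), a i * y i - a i * x i = A i * (S (i + 1) - S i) := by
    intro i
    simp only [A, S, Fin.clamp, Nat.min_eq_left (Nat.le_of_lt_succ i.isLt)]
    rw [sub_sub_sub_comm, psum_succ_sub_psum, psum_succ_sub_psum, mul_sub]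
  rw [← sub_nonneg, ← sum_sub_distrib, sum_congr rfl fun i _ => hterm i,
    Fin.sum_univ_eq_sum_range (fun i => A i * (S (i + 1) - S i)), habel]
  exact sum_nonneg fun i _ =>
    mul_nonneg (sub_nonneg.2 (hA i.le_succ)) (sub_nonneg.2 (hxy (i + 1)))

lemma sum_mul_le_sum_sortedDesc_mul (c x : Fin d → ℝ) :
    ∑ i, c i * x i ≤ ∑ i, sortedDesc c i * sortedDesc x i := by
  calc ∑ i, c i * x i
      = ∑ i, sortedDesc c i * sortedDesc x ((sortPerm c).trans (sortPerm x).symm i) := by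
        rw [← Equiv.sum_comp (sortPerm c)]
        simp [sortedDesc_eq_comp]
    _ ≤ _ := ((antitone_sortedDesc c).monovary (antitone_sortedDesc x)).sum_mul_comp_perm_le_sum_mul

lemma exists_perm_sum_sortedDesc_mul_eq (c y : Fin d → ℝ) :
    ∃ π : Equiv.Perm (Fin d), ∑ i, sortedDesc c i * sortedDesc y i = ∑ j, c j * (y ∘ π) j := by
  refine ⟨(sortPerm c).symm.trans (sortPerm y), ?_⟩
  rw [← Equiv.sum_comp (sortPerm c) (fun j => c j * (y ∘ _) j)]
  simp [sortedDesc_eq_comp]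

lemma mem_convexHull_perm_of_majorizes {x y : Fin d → ℝ} (h : Majorizes y x) :
    x ∈ convexHull ℝ (Set.range fun π : Equiv.Perm (Fin d) => y ∘ π) := by
  by_contra hx
  obtain ⟨f, u, hfu, hux⟩ := geometric_hahn_banach_closed_point (convex_convexHull ℝ _)
    ((Set.finite_range _).isCompact_convexHull (𝕜 := ℝ)).isClosed hx
  set c : Fin d → ℝ := fun j => f fun i => if j = i then 1 else 0
  have hf : ∀ v, f v = ∑ j, c j * v j := fun v => by
    simpa [c, mul_comm] using f.toLinearMap.pi_apply_eq_sum_univ v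
  obtain ⟨π, hπ⟩ := exists_perm_sum_sortedDesc_mul_eq c y
  have hmaj : ∑ i, sortedDesc c i * sortedDesc x i ≤ ∑ i, sortedDesc c i * sortedDesc y i :=
    sum_mul_le_sum_mul_of_psum_le (antitone_sortedDesc c) h.1
      (by rw [sum_sortedDesc, sum_sortedDesc, h.2])
  have hyπ := hfu _ (subset_convexHull ℝ _ ⟨π, rfl⟩)
  rw [hf] at hux hyπ
  linarith [sum_mul_le_sum_sortedDesc_mul c x]

end Majorization

section UnitaryOrbit

variable {n : Type*} [Fintype n] [DecidableEq n]

def unitaryOrbit (σ : Matrix n n ℂ) : Set (Matrix n n ℂ) :=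
  {ρ | ∃ U ∈ unitaryGroup n ℂ, ρ = U * σ * Uᴴ}

lemma exists_sum_unitary_conj_iff_mem_convexHull (ρ σ : Matrix n n ℂ) :
    (∃ (m : ℕ) (p : Fin m → ℝ) (U : Fin m → Matrix n n ℂ),
        (∀ i, 0 ≤ p i) ∧ (∑ i, p i = 1) ∧ (∀ i, U i ∈ unitaryGroup n ℂ) ∧
        ρ = ∑ i, (p i : ℂ) • (U i * σ * (U i)ᴴ)) ↔
      ρ ∈ convexHull ℝ (unitaryOrbit σ) := by
  simp only [Complex.coe_smul]
  constructor
  · rintro ⟨m, p, U, hp0, hp1, hU, rfl⟩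
    exact mem_convexHull_of_exists_fintype p _ hp0 hp1 (fun i => ⟨U i, hU i, rfl⟩) rfl
  · intro h
    obtain ⟨ι, _, p, z, hp0, hp1, hz, rfl⟩ := mem_convexHull_iff_exists_fintype.1 h
    choose U hU hzU using hz
    set e := (Fintype.equivFin ι).symm
    refine ⟨Fintype.card ι, p ∘ e, U ∘ e, fun i => hp0 _, by rwa [← e.sum_comp] at hp1,
      fun i => hU _, ?_⟩
    rw [← e.sum_comp]
    simp [hzU]

lemma map_normSq_mem_doublyStochastic {U : Matrix n n ℂ} (hU : U ∈ unitaryGroup n ℂ) :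
    U.map Complex.normSq ∈ doublyStochastic ℝ n := by
  refine mem_doublyStochastic_iff_sum.2 ⟨fun i j => Complex.normSq_nonneg _, fun i => ?_,
    fun j => ?_⟩
  · have h := congr_fun₂ (mem_unitaryGroup_iff.1 hU) i i
    simp only [mul_apply, star_apply, Complex.star_def, Complex.mul_conj, one_apply_eq] at h
    exact_mod_cast h
  · have h := congr_fun₂ (mem_unitaryGroup_iff'.1 hU) j j
    simp only [mul_apply, star_apply, Complex.star_def, ← Complex.normSq_eq_conj_mul_self,
      one_apply_eq] at h
    exact_mod_cast h

lemma mul_diagonal_mul_conjTranspose_apply_self (M : Matrix n n ℂ) (v : n → ℝ) (a : n) :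
    (M * diagonal (fun j => (v j : ℂ)) * Mᴴ) a a = ((M.map Complex.normSq *ᵥ v) a : ℂ) := by
  rw [mul_apply]
  simp only [mul_diagonal, conjTranspose_apply, Complex.star_def, mulVec, dotProduct, map_apply]
  push_cast
  refine sum_congr rfl fun j _ => ?_
  rw [← Complex.mul_conj]
  ring

lemma permMatrix_mul_diagonal_mul_conjTranspose {α : Type*} [CommRing α] [StarRing α]
    (π : Equiv.Perm n) (v : n → α) :
    π.permMatrix α * diagonal v * (π.permMatrix α)ᴴ = diagonal (v ∘ π) := by
  rw [conjTranspose_permMatrix, Equiv.Perm.permMatrix, Equiv.Perm.permMatrix,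
    PEquiv.toMatrix_toPEquiv_mul, PEquiv.mul_toMatrix_toPEquiv]
  exact submatrix_diagonal_equiv v π

lemma permMatrix_mem_unitaryGroup {α : Type*} [CommRing α] [StarRing α] (π : Equiv.Perm n) :
    π.permMatrix α ∈ unitaryGroup n α := by
  rw [mem_unitaryGroup_iff, star_eq_conjTranspose, conjTranspose_permMatrix, ← permMatrix_mul,
    inv_mul_cancel, permMatrix_one]

end UnitaryOrbit

namespace Matrix.IsHermitian

variable {n : Type*} [Fintype n] [DecidableEq n] {A C : Matrix n n ℂ}

lemma eq_eigenvectorUnitary_mul_diagonal_mul_conjTranspose (hA : A.IsHermitian) :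
    A = (hA.eigenvectorUnitary : Matrix n n ℂ) * diagonal (fun j => (hA.eigenvalues j : ℂ)) *
      (hA.eigenvectorUnitary : Matrix n n ℂ)ᴴ :=
  hA.spectral_theorem

lemma conjTranspose_eigenvectorUnitary_mul_mul (hA : A.IsHermitian) :
    (hA.eigenvectorUnitary : Matrix n n ℂ)ᴴ * A * hA.eigenvectorUnitary =
      diagonal (fun j => (hA.eigenvalues j : ℂ)) := by
  simpa [star_eq_conjTranspose, Function.comp_def] using
    hA.conjStarAlgAut_star_eigenvectorUnitary

lemma exists_doublyStochastic_eigenvalues_eq_mulVec (hA : A.IsHermitian) (hC : C.IsHermitian)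
    (h : A ∈ convexHull ℝ (unitaryOrbit C)) :
    ∃ B ∈ doublyStochastic ℝ n, hA.eigenvalues = B *ᵥ hC.eigenvalues := by
  set V : Matrix n n ℂ := (hA.eigenvectorUnitary : Matrix n n ℂ)
  set W : Matrix n n ℂ := (hC.eigenvectorUnitary : Matrix n n ℂ)
  let L : Matrix n n ℂ →ₗ[ℝ] n → ℝ :=
    { toFun := fun X a => ((Vᴴ * X * V) a a).re
      map_add' := fun X Y => by ext a; simp [Matrix.mul_add, Matrix.add_mul]
      map_smul' := fun r X => by ext a; simp }
  set D := (fun B : Matrix n n ℝ => B *ᵥ hC.eigenvalues) '' doublyStochastic ℝ n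
  have hD : Convex ℝ D := convex_doublyStochastic.is_linear_image
    ⟨fun B B' => add_mulVec B B' _, fun r B => smul_mulVec r B _⟩
  have hLA : L A = hA.eigenvalues := by
    ext a
    simp [L, V, hA.conjTranspose_eigenvectorUnitary_mul_mul]
  have hL : L '' unitaryOrbit C ⊆ D := by
    rintro _ ⟨_, ⟨U, hU, rfl⟩, rfl⟩
    have hM : Vᴴ * U * W ∈ unitaryGroup n ℂ :=
      mul_mem (mul_mem (Unitary.star_mem hA.eigenvectorUnitary.2) hU) hC.eigenvectorUnitary.2
    refine ⟨_, map_normSq_mem_doublyStochastic hM, funext fun a => ?_⟩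
    have hconj : Vᴴ * (U * C * Uᴴ) * V =
        Vᴴ * U * W * diagonal (fun j => (hC.eigenvalues j : ℂ)) * (Vᴴ * U * W)ᴴ := by
      conv_lhs => rw [hC.eq_eigenvectorUnitary_mul_diagonal_mul_conjTranspose]
      simp only [conjTranspose_mul, conjTranspose_conjTranspose, Matrix.mul_assoc, W]
    simp only [L, LinearMap.coe_mk, AddHom.coe_mk, hconj,
      mul_diagonal_mul_conjTranspose_apply_self, Complex.ofReal_re]
  have hLh : L A ∈ convexHull ℝ (L '' unitaryOrbit C) :=
    L.image_convexHull _ ▸ Set.mem_image_of_mem L h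
  obtain ⟨B, hB, hBA⟩ := convexHull_min hL hD hLh
  exact ⟨B, hB, hLA ▸ hBA.symm⟩

lemma mem_convexHull_unitaryOrbit (hA : A.IsHermitian) (hC : C.IsHermitian)
    (h : hA.eigenvalues ∈ convexHull ℝ (Set.range fun π : Equiv.Perm n => hC.eigenvalues ∘ π)) :
    A ∈ convexHull ℝ (unitaryOrbit C) := by
  set V : Matrix n n ℂ := (hA.eigenvectorUnitary : Matrix n n ℂ)
  set W : Matrix n n ℂ := (hC.eigenvectorUnitary : Matrix n n ℂ)
  let Φ : (n → ℝ) →ₗ[ℝ] Matrix n n ℂ :=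
    { toFun := fun v => V * diagonal (fun j => (v j : ℂ)) * Vᴴ
      map_add' := fun v w => by simp [← diagonal_add, Matrix.mul_add, Matrix.add_mul]
      map_smul' := fun r v => by
        have : diagonal (fun j => ((r • v) j : ℂ)) = r • diagonal (fun j => (v j : ℂ)) := by
          ext i j; by_cases hij : i = j <;> simp [hij]
        simp only [this, Matrix.mul_smul, Matrix.smul_mul, RingHom.id_apply] }
  have hΦ : Φ '' Set.range (fun π : Equiv.Perm n => hC.eigenvalues ∘ π) ⊆ unitaryOrbit C := by
    rintro _ ⟨_, ⟨π, rfl⟩, rfl⟩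
    refine ⟨V * π.permMatrix ℂ * Wᴴ, mul_mem (mul_mem hA.eigenvectorUnitary.2
      (permMatrix_mem_unitaryGroup π)) (Unitary.star_mem hC.eigenvectorUnitary.2), ?_⟩
    have hconj : V * π.permMatrix ℂ * Wᴴ * C * (V * π.permMatrix ℂ * Wᴴ)ᴴ =
        V * (π.permMatrix ℂ * (Wᴴ * C * W) * (π.permMatrix ℂ)ᴴ) * Vᴴ := by
      simp only [conjTranspose_mul, conjTranspose_conjTranspose, Matrix.mul_assoc]
    rw [hconj, show Wᴴ * C * W = _ from hC.conjTranspose_eigenvectorUnitary_mul_mul,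
      permMatrix_mul_diagonal_mul_conjTranspose]
    rfl
  rw [hA.eq_eigenvectorUnitary_mul_diagonal_mul_conjTranspose]
  exact convexHull_mono hΦ (Φ.image_convexHull _ ▸ Set.mem_image_of_mem Φ h)

end Matrix.IsHermitian

theorem convex_combination_unitary_conjugates_iff_majorized_general
    {d : ℕ} (ρ σ : Matrix (Fin d) (Fin d) ℂ)
    (hρ : ρ.PosSemidef)
    (hσ : σ.PosSemidef) :
    (∃ (n : ℕ) (p : Fin n → ℝ) (U : Fin n → Matrix (Fin d) (Fin d) ℂ),
        (∀ i, 0 ≤ p i) ∧ (∑ i, p i = 1) ∧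
        (∀ i, U i ∈ Matrix.unitaryGroup (Fin d) ℂ) ∧
        ρ = ∑ i, (p i : ℂ) • (U i * σ * (U i)ᴴ)) ↔
      Majorizes hσ.1.eigenvalues hρ.1.eigenvalues := by
  rw [exists_sum_unitary_conj_iff_mem_convexHull]
  constructor
  · intro h
    obtain ⟨B, hB, hρσ⟩ := hρ.1.exists_doublyStochastic_eigenvalues_eq_mulVec hσ.1 h
    rw [hρσ]
    exact majorizes_mulVec_of_mem_doublyStochastic hB _
  · exact fun h => hρ.1.mem_convexHull_unitaryOrbit hσ.1 (mem_convexHull_perm_of_majorizes h)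

/-- ρ is a convex combination of unitary conjugates of σ iff the
eigenvalue vector of ρ is majorized by that of σ (Uhlmann). -/
theorem convex_combination_unitary_conjugates_iff_majorized
    {d : ℕ} (ρ σ : Matrix (Fin d) (Fin d) ℂ)
    (hρ : ρ.PosSemidef) (hρt : ρ.trace = 1)
    (hσ : σ.PosSemidef) (hσt : σ.trace = 1) :
    (∃ (n : ℕ) (p : Fin n → ℝ) (U : Fin n → Matrix (Fin d) (Fin d) ℂ),
        (∀ i, 0 ≤ p i) ∧ (∑ i, p i = 1) ∧
        (∀ i, U i ∈ Matrix.unitaryGroup (Fin d) ℂ) ∧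
        ρ = ∑ i, (p i : ℂ) • (U i * σ * (U i)ᴴ)) ↔
      Majorizes hσ.1.eigenvalues hρ.1.eigenvalues :=
  convex_combination_unitary_conjugates_iff_majorized_general ρ σ hρ hσ
end

section
/- The monotones are supermultiplicative under tensoring of states shared by the same N parties: E_{k_1,...,k_N}(|ψ⟩) · E_{l_1,...,l_N}(|χ⟩) ≤ E_{k_1 l_1,...,k_N l_N}(|ψ⟩ ⊗ |χ⟩), where in the product state each party i holds the tensor product X_i ⊗ Y_i of its two subsystems. -/
open scoped ComplexOrder Matrix

/-- Orthogonal projector of rank k. -/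
def IsProjOfRank {ι : Type*} [Fintype ι] [DecidableEq ι]
    (P : Matrix ι ι ℂ) (k : ℕ) : Prop :=
  P.IsHermitian ∧ P * P = P ∧ P.rank = k

/-- Action of a tensor product Γ₁ ⊗ ⋯ ⊗ Γ_N of local operators on an N-partite vector. -/
noncomputable def applyLocal {N : ℕ} {ι : Fin N → Type*} [∀ i, Fintype (ι i)]
    (Γ : ∀ i, Matrix (ι i) (ι i) ℂ) (ψ : (∀ i, ι i) → ℂ) : (∀ i, ι i) → ℂ :=
  fun x => ∑ y : ∀ i, ι i, (∏ i, Γ i (x i) (y i)) * ψ y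

/-- Squared norm. -/
def nsq {α : Type*} [Fintype α] (ψ : α → ℂ) : ℝ := ∑ x, Complex.normSq (ψ x)

/-- The monotone E_{k₁,…,k_N}: the maximal squared norm of the projection of ψ onto a
tensor product of local subspaces of dimensions k₁,…,k_N. -/
noncomputable def Emon {N : ℕ} {ι : Fin N → Type*} [∀ i, Fintype (ι i)]
    [∀ i, DecidableEq (ι i)] (k : Fin N → ℕ) (ψ : (∀ i, ι i) → ℂ) : ℝ :=
  sSup {x | ∃ Γ : ∀ i, Matrix (ι i) (ι i) ℂ,
    (∀ i, IsProjOfRank (Γ i) (k i)) ∧ x = nsq (applyLocal Γ ψ)}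

namespace EmonAux

set_option linter.unusedSectionVars false

/-- rank = trace for idempotent complex matrices. -/
lemma trace_eq_rank {ι : Type*} [Fintype ι] [DecidableEq ι]
    {P : Matrix ι ι ℂ} (h : P * P = P) : P.trace = (P.rank : ℂ) := by
  have hproj : LinearMap.IsProj (LinearMap.range P.mulVecLin) P.mulVecLin := by
    constructor
    · intro x; exact LinearMap.mem_range_self _ x
    · rintro x ⟨y, rfl⟩
      have h2 : Matrix.mulVecLin (P * P) y = Matrix.mulVecLin P y := by rw [h]
      simpa [Matrix.mulVecLin_mul] using h2
  have ht := hproj.trace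
  have hm : LinearMap.toMatrix' P.mulVecLin = P := by
    rw [← Matrix.toLin'_apply', LinearMap.toMatrix'_toLin']
  rw [LinearMap.trace_eq_matrix_trace ℂ (Pi.basisFun ℂ ι),
    LinearMap.toMatrix_eq_toMatrix', hm] at ht
  rw [ht, Matrix.rank]

lemma star_dot_self {α : Type*} [Fintype α] (v : α → ℂ) :
    dotProduct (star v) v = (nsq v : ℂ) := by
  simp only [dotProduct, nsq, Pi.star_apply, Complex.ofReal_sum]
  refine Finset.sum_congr rfl fun x _ => ?_
  rw [Complex.star_def, mul_comm, Complex.mul_conj]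

lemma nsq_nonneg {α : Type*} [Fintype α] (v : α → ℂ) : 0 ≤ nsq v :=
  Finset.sum_nonneg fun _ _ => Complex.normSq_nonneg _

lemma nsq_mulVec_le {α : Type*} [Fintype α] [DecidableEq α] {M : Matrix α α ℂ}
    (hH : M.IsHermitian) (hI : M * M = M) (ψ : α → ℂ) :
    nsq (M *ᵥ ψ) ≤ nsq ψ := by
  have key : ∀ (Q : Matrix α α ℂ), Q.IsHermitian → Q * Q = Q →
      dotProduct (star ψ) (Q *ᵥ ψ) = (nsq (Q *ᵥ ψ) : ℂ) := by
    intro Q hQH hQI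
    rw [← star_dot_self, Matrix.star_mulVec, Matrix.dotProduct_mulVec,
      Matrix.dotProduct_mulVec, Matrix.vecMul_vecMul, hQH.eq, hQI]
  have h1H : (1 - M).IsHermitian := Matrix.IsHermitian.sub Matrix.isHermitian_one hH
  have h1I : (1 - M) * (1 - M) = 1 - M := by
    have e : (1 - M) * (1 - M) = 1 - M - (M - M * M) := by noncomm_ring
    rw [e, hI]; simp
  have hsum : (nsq ψ : ℂ) = (nsq (M *ᵥ ψ) : ℂ) + (nsq ((1 - M) *ᵥ ψ) : ℂ) := by
    rw [← key M hH hI, ← key _ h1H h1I, ← dotProduct_add, ← Matrix.add_mulVec,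
      add_sub_cancel, Matrix.one_mulVec, star_dot_self]
  have hsum' : nsq ψ = nsq (M *ᵥ ψ) + nsq ((1 - M) *ᵥ ψ) := by exact_mod_cast hsum
  have := nsq_nonneg ((1 - M) *ᵥ ψ)
  linarith

variable {N : ℕ} {ι κ : Fin N → Type*} [∀ i, Fintype (ι i)] [∀ i, DecidableEq (ι i)]
  [∀ i, Fintype (κ i)] [∀ i, DecidableEq (κ i)]

noncomputable def bigM (Γ : ∀ i, Matrix (ι i) (ι i) ℂ) :
    Matrix (∀ i, ι i) (∀ i, ι i) ℂ :=
  Matrix.of fun x y => ∏ i, Γ i (x i) (y i)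

lemma applyLocal_eq (Γ : ∀ i, Matrix (ι i) (ι i) ℂ) (ψ : (∀ i, ι i) → ℂ) :
    applyLocal Γ ψ = (bigM Γ) *ᵥ ψ := rfl

lemma bigM_mul (Γ Δ : ∀ i, Matrix (ι i) (ι i) ℂ) :
    bigM Γ * bigM Δ = bigM (fun i => Γ i * Δ i) := by
  ext x z
  simp only [Matrix.mul_apply, bigM, Matrix.of_apply, ← Finset.prod_mul_distrib]
  exact (Fintype.prod_sum fun i j => Γ i (x i) j * Δ i j (z i)).symm

lemma bigM_conjTranspose (Γ : ∀ i, Matrix (ι i) (ι i) ℂ) :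
    (bigM Γ)ᴴ = bigM (fun i => (Γ i)ᴴ) := by
  ext x y
  simp [bigM, Matrix.conjTranspose_apply, star_prod]

/-- applying local Hermitian projectors does not increase the norm. -/
lemma nsq_applyLocal_le (Γ : ∀ i, Matrix (ι i) (ι i) ℂ)
    (h : ∀ i, (Γ i).IsHermitian ∧ Γ i * Γ i = Γ i) (ψ : (∀ i, ι i) → ℂ) :
    nsq (applyLocal Γ ψ) ≤ nsq ψ := by
  rw [applyLocal_eq]
  refine nsq_mulVec_le ?_ ?_ ψ
  · show (bigM Γ)ᴴ = bigM Γ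
    rw [bigM_conjTranspose,
      show (fun i => (Γ i)ᴴ) = Γ from funext fun i => (h i).1.eq]
  · rw [bigM_mul,
      show (fun i => Γ i * Γ i) = Γ from funext fun i => (h i).2]

def pairEquiv (ι κ : Fin N → Type*) : (∀ i, ι i × κ i) ≃ (∀ i, ι i) × (∀ i, κ i) where
  toFun x := (fun i => (x i).1, fun i => (x i).2)
  invFun p i := (p.1 i, p.2 i)
  left_inv x := rfl
  right_inv p := rfl

lemma nsq_tensor (f : (∀ i, ι i) → ℂ) (g : (∀ i, κ i) → ℂ) :
    nsq (fun x : ∀ i, ι i × κ i => f (fun i => (x i).1) * g (fun i => (x i).2)) =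
      nsq f * nsq g := by
  unfold nsq
  rw [show (∑ x : ∀ i, ι i × κ i,
        Complex.normSq (f (fun i => (x i).1) * g (fun i => (x i).2))) =
      ∑ p : (∀ i, ι i) × (∀ i, κ i), Complex.normSq (f p.1) * Complex.normSq (g p.2) from
    Fintype.sum_equiv (pairEquiv ι κ) _ _ (fun x => by simp [pairEquiv, Complex.normSq_mul]),
    Fintype.sum_prod_type]
  simp_rw [← Finset.mul_sum]
  rw [← Finset.sum_mul]

lemma applyLocal_tensor (Γ : ∀ i, Matrix (ι i) (ι i) ℂ) (Δ : ∀ i, Matrix (κ i) (κ i) ℂ)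
    (ψ : (∀ i, ι i) → ℂ) (χ : (∀ i, κ i) → ℂ) :
    applyLocal (fun i => Matrix.kroneckerMap (· * ·) (Γ i) (Δ i))
      (fun x : ∀ i, ι i × κ i => ψ (fun i => (x i).1) * χ (fun i => (x i).2)) =
    fun x => applyLocal Γ ψ (fun i => (x i).1) * applyLocal Δ χ (fun i => (x i).2) := by
  funext x
  unfold applyLocal
  rw [show (∑ y : ∀ i, ι i × κ i,
        (∏ i, Matrix.kroneckerMap (· * ·) (Γ i) (Δ i) (x i) (y i)) *
          (ψ (fun i => (y i).1) * χ (fun i => (y i).2))) =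
      ∑ p : (∀ i, ι i) × (∀ i, κ i),
        ((∏ i, Γ i (x i).1 (p.1 i)) * ψ p.1) * ((∏ i, Δ i (x i).2 (p.2 i)) * χ p.2) from
    Fintype.sum_equiv (pairEquiv ι κ) _ _
      (fun y => by simp [pairEquiv, Finset.prod_mul_distrib]; ring),
    Fintype.sum_prod_type]
  simp_rw [← Finset.mul_sum]
  rw [← Finset.sum_mul]

/-- tensor (Kronecker) product of projectors is a projector of product rank. -/
lemma isProjOfRank_kronecker {α β : Type*} [Fintype α] [DecidableEq α]
    [Fintype β] [DecidableEq β] {A : Matrix α α ℂ} {B : Matrix β β ℂ} {k l : ℕ}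
    (hA : IsProjOfRank A k) (hB : IsProjOfRank B l) :
    IsProjOfRank (Matrix.kroneckerMap (· * ·) A B) (k * l) := by
  obtain ⟨hAH, hAI, hAr⟩ := hA
  obtain ⟨hBH, hBI, hBr⟩ := hB
  have hI : Matrix.kroneckerMap (· * ·) A B * Matrix.kroneckerMap (· * ·) A B =
      Matrix.kroneckerMap (· * ·) A B := by
    rw [← Matrix.mul_kronecker_mul, hAI, hBI]
  refine ⟨?_, hI, ?_⟩
  · show _ᴴ = _
    ext x y
    simp only [Matrix.conjTranspose_apply, Matrix.kroneckerMap_apply, star_mul']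
    rw [← Matrix.conjTranspose_apply A, ← Matrix.conjTranspose_apply B, hAH.eq, hBH.eq]
  · have h1 := trace_eq_rank hI
    rw [Matrix.trace_kronecker, trace_eq_rank hAI, trace_eq_rank hBI, hAr, hBr] at h1
    exact_mod_cast h1.symm

lemma sSup_mul_sSup_le {S T U : Set ℝ}
    (hS : ∀ x ∈ S, 0 ≤ x) (hT : ∀ x ∈ T, 0 ≤ x) (hU0 : ∀ x ∈ U, 0 ≤ x)
    (hU : BddAbove U) (hmem : ∀ s ∈ S, ∀ t ∈ T, s * t ∈ U) :
    sSup S * sSup T ≤ sSup U := by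
  have hB : 0 ≤ sSup U := Real.sSup_nonneg hU0
  have hTn : 0 ≤ sSup T := Real.sSup_nonneg hT
  have step : ∀ s ∈ S, s * sSup T ≤ sSup U := by
    intro s hs
    rcases eq_or_lt_of_le (hS s hs) with h0 | hpos
    · rw [← h0, zero_mul]; exact hB
    · rw [mul_comm, ← le_div_iff₀ hpos]
      refine Real.sSup_le (fun t ht => (le_div_iff₀ hpos).mpr ?_) (div_nonneg hB hpos.le)
      rw [mul_comm]
      exact le_csSup hU (hmem s hs t ht)
  rcases eq_or_lt_of_le hTn with h0 | hpos
  · rw [← h0, mul_zero]; exact hB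
  · rw [← le_div_iff₀ hpos]
    exact Real.sSup_le (fun s hs => (le_div_iff₀ hpos).mpr (step s hs)) (div_nonneg hB hpos.le)

end EmonAux

/-- supermultiplicativity of the monotones under tensoring of states
shared by the same N parties (party i holds X_i ⊗ Y_i). -/
theorem Emon_supermultiplicative
    {N : ℕ} {ι κ : Fin N → Type*}
    [∀ i, Fintype (ι i)] [∀ i, DecidableEq (ι i)]
    [∀ i, Fintype (κ i)] [∀ i, DecidableEq (κ i)]
    (k l : Fin N → ℕ) (ψ : (∀ i, ι i) → ℂ) (χ : (∀ i, κ i) → ℂ) :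
    Emon k ψ * Emon l χ ≤
      Emon (fun i => k i * l i)
        (fun x : ∀ i, ι i × κ i => ψ (fun i => (x i).1) * χ (fun i => (x i).2)) := by
  classical
  unfold Emon
  refine EmonAux.sSup_mul_sSup_le ?_ ?_ ?_ ?_ ?_
  · rintro x ⟨Γ, hΓ, rfl⟩; exact EmonAux.nsq_nonneg _
  · rintro x ⟨Δ, hΔ, rfl⟩; exact EmonAux.nsq_nonneg _
  · rintro x ⟨Γ, hΓ, rfl⟩; exact EmonAux.nsq_nonneg _
  · refine ⟨nsq (fun x : ∀ i, ι i × κ i => ψ (fun i => (x i).1) * χ (fun i => (x i).2)), ?_⟩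
    rintro x ⟨Γ, hΓ, rfl⟩
    exact EmonAux.nsq_applyLocal_le Γ (fun i => ⟨(hΓ i).1, (hΓ i).2.1⟩) _
  · rintro s ⟨Γ, hΓ, rfl⟩ t ⟨Δ, hΔ, rfl⟩
    refine ⟨fun i => Matrix.kroneckerMap (· * ·) (Γ i) (Δ i),
      fun i => EmonAux.isProjOfRank_kronecker (hΓ i) (hΔ i), ?_⟩
    rw [EmonAux.applyLocal_tensor, EmonAux.nsq_tensor]
end

section
/- For the three-qubit GHZ state |GHZ⟩ = (|000⟩+|111⟩)/√2, E_{2,1,1}(|GHZ⟩) = E_{1,2,1} = E_{1,1,2} = 1/2, E_{1,1,1}(|GHZ⟩) = 1/2, and E_{2,2,1}(|GHZ⟩) = 1/2. -/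
open scoped ComplexOrder Matrix

/-- The three-qubit GHZ state (|000⟩ + |111⟩)/√2. -/
noncomputable def GHZ : (Fin 3 → Fin 2) → ℂ :=
  fun x => if x = (fun _ => 0) then (Real.sqrt 2 : ℂ)⁻¹
    else if x = (fun _ => 1) then (Real.sqrt 2 : ℂ)⁻¹ else 0

lemma rank_zero_eq {A : Matrix (Fin 2) (Fin 2) ℂ} (h : A.rank = 0) : A = 0 := by
  have h1 : LinearMap.range A.mulVecLin = ⊥ := by
    rw [Matrix.rank] at h
    exact Submodule.finrank_eq_zero.mp h
  rw [LinearMap.range_eq_bot] at h1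
  ext i j
  have h2 : A *ᵥ Pi.single j 1 = 0 := by
    rw [← Matrix.mulVecLin_apply, h1]; rfl
  simpa using congrFun h2 i

lemma proj_rank_two {P : Matrix (Fin 2) (Fin 2) ℂ} (h : IsProjOfRank P 2) : P = 1 := by
  obtain ⟨hH, hI, hR⟩ := h
  have hPQ : P * (1 - P) = 0 := by
    rw [Matrix.mul_sub, mul_one, hI, sub_self]
  have hle := Matrix.rank_add_rank_le_card_of_mul_eq_zero hPQ
  rw [hR] at hle
  simp only [Fintype.card_fin] at hle
  have h0 : (1 - P).rank = 0 := by omega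
  have := rank_zero_eq h0
  have : (1 : Matrix (Fin 2) (Fin 2) ℂ) - P = 0 := this
  have : P = 1 := by
    have := sub_eq_zero.mp this
    exact this.symm
  exact this

noncomputable def Mm (p q : ℝ) (α : ℂ) : Matrix (Fin 2) (Fin 2) ℂ :=
  !![(p : ℂ), α; (starRingEnd ℂ) α, (q : ℂ)]

lemma proj_rank_one {P : Matrix (Fin 2) (Fin 2) ℂ} (h : IsProjOfRank P 1) :
    ∃ (p : ℝ) (α : ℂ), 0 ≤ p ∧ p ≤ 1 ∧ Complex.normSq α = p * (1 - p) ∧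
      P = Mm p (1 - p) α := by
  obtain ⟨hH, hI, hR⟩ := h
  have h10 : P 1 0 = (starRingEnd ℂ) (P 0 1) := (hH.apply 1 0).symm
  have h00 : P 0 0 = ((P 0 0).re : ℂ) := (Complex.conj_eq_iff_re.mp (hH.apply 0 0)).symm
  have h11 : P 1 1 = ((P 1 1).re : ℂ) := (Complex.conj_eq_iff_re.mp (hH.apply 1 1)).symm
  set p := (P 0 0).re with hp
  set q := (P 1 1).re with hq
  set α := P 0 1 with hα
  have e00 : (p : ℂ) * p + α * (starRingEnd ℂ) α = p := by
    have h2 := congrFun (congrFun hI 0) 0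
    rw [Matrix.mul_apply, Fin.sum_univ_two] at h2
    rw [← hα, h00, h10] at h2
    linear_combination h2
  have e11 : ((starRingEnd ℂ) α) * α + (q : ℂ) * q = q := by
    have h2 := congrFun (congrFun hI 1) 1
    rw [Matrix.mul_apply, Fin.sum_univ_two] at h2
    rw [← hα, h11, h10] at h2
    linear_combination h2
  have hdet : P.det = 0 := by
    by_contra hd
    have hu : IsUnit P := P.isUnit_iff_isUnit_det.mpr (isUnit_iff_ne_zero.mpr hd)
    have h3 := Matrix.rank_of_isUnit P hu
    rw [hR] at h3
    simp [Fintype.card_fin] at h3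
  have hdet2 : (p : ℂ) * q - α * (starRingEnd ℂ) α = 0 := by
    rw [Matrix.det_fin_two, ← hα, h00, h11, h10] at hdet
    linear_combination hdet
  have n00 : p * p + Complex.normSq α = p := by
    have h2 := e00
    rw [Complex.mul_conj] at h2
    exact_mod_cast h2
  have n11 : Complex.normSq α + q * q = q := by
    have h2 := e11
    rw [mul_comm ((starRingEnd ℂ) α) α, Complex.mul_conj] at h2
    exact_mod_cast h2
  have ndet : p * q = Complex.normSq α := by
    have h2 := hdet2
    rw [Complex.mul_conj] at h2
    have h3 : ((p * q - Complex.normSq α : ℝ) : ℂ) = 0 := by push_cast; linear_combination h2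
    have h4 := Complex.ofReal_eq_zero.mp h3
    linarith
  have hsum : p + q = 1 := by
    rcases eq_or_ne p 0 with hp0 | hp0
    · have hns : Complex.normSq α = 0 := by rw [← ndet, hp0]; ring
      have hα0 : α = 0 := Complex.normSq_eq_zero.mp hns
      have hqq : q * (q - 1) = 0 := by nlinarith [n11]
      rcases mul_eq_zero.mp hqq with hq0 | hq1
      · exfalso
        have hPz : P = 0 := by
          ext i j
          fin_cases i <;> fin_cases j <;>
            simp [h00, h10, h11, ← hα, ← hp, ← hq, hp0, hq0, hα0]
        rw [hPz, Matrix.rank_zero] at hR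
        exact one_ne_zero hR.symm
      · rw [hp0]; linarith [sub_eq_zero.mp hq1]
    · have h5 : p * (p + q) = p * 1 := by rw [← ndet] at n00; ring_nf; linarith [n00]
      exact mul_left_cancel₀ hp0 h5
  have hq' : q = 1 - p := by linarith
  have hple : p ≤ 1 := by nlinarith [Complex.normSq_nonneg α]
  have hpge : 0 ≤ p := by nlinarith [Complex.normSq_nonneg α]
  refine ⟨p, α, hpge, hple, by rw [← ndet, hq'], ?_⟩
  ext i j
  fin_cases i <;> fin_cases j <;>
    simp [Mm, ← hq', h00, h10, h11, ← hα]

def e3 : (Fin 2 × Fin 2 × Fin 2) ≃ (Fin 3 → Fin 2) where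
  toFun p := ![p.1, p.2.1, p.2.2]
  invFun x := (x 0, x 1, x 2)
  left_inv := by decide
  right_inv := by decide

lemma sum_fn3 {M : Type*} [AddCommMonoid M] (f : (Fin 3 → Fin 2) → M) :
    ∑ x : Fin 3 → Fin 2, f x = ∑ a : Fin 2, ∑ b : Fin 2, ∑ c : Fin 2, f ![a, b, c] := by
  rw [← Equiv.sum_comp e3 f, Fintype.sum_prod_type]
  simp only [Fintype.sum_prod_type]
  rfl

lemma sum_mul_GHZ (g : (Fin 3 → Fin 2) → ℂ) :
    ∑ y, g y * GHZ y
      = (g (fun _ => 0) + g (fun _ => 1)) * ((Real.sqrt 2 : ℂ))⁻¹ := by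
  have hne : (fun _ => 0 : Fin 3 → Fin 2) ≠ (fun _ => 1) := by
    intro h; exact absurd (congrFun h 0) (by decide)
  rw [← Finset.sum_subset (Finset.subset_univ ({(fun _ => 0 : Fin 3 → Fin 2), (fun _ => 1)} : Finset _))]
  · rw [Finset.sum_pair hne]
    have h0 : GHZ (fun _ => 0) = ((Real.sqrt 2 : ℂ))⁻¹ := by simp [GHZ]
    have h1 : GHZ (fun _ => 1) = ((Real.sqrt 2 : ℂ))⁻¹ := by simp [GHZ, hne.symm]
    rw [h0, h1]; ring
  · intro y _ hy
    simp only [Finset.mem_insert, Finset.mem_singleton, not_or] at hy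
    simp [GHZ, hy.1, hy.2]

lemma eval (pa qa pb qb pc qc : ℝ) (α β γ : ℂ) :
    nsq (applyLocal ![Mm pa qa α, Mm pb qb β, Mm pc qc γ] GHZ) =
      1/2 * ((pa^2 + Complex.normSq α) * (pb^2 + Complex.normSq β) * (pc^2 + Complex.normSq γ)
        + (qa^2 + Complex.normSq α) * (qb^2 + Complex.normSq β) * (qc^2 + Complex.normSq γ)
        + 2 * ((α*β*γ).re) * ((pa+qa)*(pb+qb)*(pc+qc))) := by
  unfold nsq applyLocal
  simp only [sum_mul_GHZ]
  rw [sum_fn3]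
  simp only [Fin.sum_univ_two, Fin.prod_univ_three]
  simp only [Matrix.cons_val_zero, Matrix.cons_val_one, Matrix.head_cons, Matrix.cons_val_two,
    Matrix.tail_cons]
  norm_num [Mm]
  simp only [Complex.normSq_apply, Complex.add_re, Complex.add_im, Complex.mul_re,
    Complex.mul_im, Complex.conj_re, Complex.conj_im, Complex.ofReal_re, Complex.ofReal_im]
  ring

lemma key_ineq (X Y r t : ℝ) (hX : 0 ≤ X) (hY : 0 ≤ Y) (hXY : X + Y ≤ 1)
    (hr : 0 ≤ r) (hr1 : r ≤ 1) (ht : t^2 ≤ X*Y*r*(1-r)) :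
    X*r + Y*(1-r) + 2*t ≤ 1 := by
  have h1r : 0 ≤ 1 - r := by linarith
  have hM : 0 ≤ X*(1-r) + Y*r := add_nonneg (mul_nonneg hX h1r) (mul_nonneg hY hr)
  have h2 : 2*t ≤ X*(1-r) + Y*r := by
    nlinarith [sq_nonneg (X*(1-r) - Y*r), sq_nonneg (X*(1-r) + Y*r - 2*t), sq_nonneg t, hM]
  nlinarith [h2]

lemma re_sq_le_normSq (z : ℂ) : z.re^2 ≤ Complex.normSq z := by
  rw [Complex.normSq_apply]; nlinarith [sq_nonneg z.im]

lemma id_eq_Mm : (1 : Matrix (Fin 2) (Fin 2) ℂ) = Mm 1 1 0 := by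
  ext i j
  fin_cases i <;> fin_cases j <;> simp [Mm, Matrix.one_apply]

lemma D1_proj : IsProjOfRank (Mm 1 0 0) 1 := by
  refine ⟨?_, ?_, ?_⟩
  · ext i j
    fin_cases i <;> fin_cases j <;> simp [Mm, Matrix.conjTranspose_apply]
  · ext i j
    fin_cases i <;> fin_cases j <;>
      simp [Mm, Matrix.mul_apply, Fin.sum_univ_two]
  · have hd : Mm 1 0 0 = Matrix.diagonal ![(1 : ℂ), 0] := by
      ext i j
      fin_cases i <;> fin_cases j <;> simp [Mm, Matrix.diagonal]
    rw [hd, Matrix.rank_diagonal]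
    rw [Fintype.card_eq_one_iff]
    refine ⟨⟨0, by norm_num⟩, ?_⟩
    rintro ⟨i, hi⟩
    fin_cases i
    · rfl
    · simp at hi

lemma id_proj : IsProjOfRank (1 : Matrix (Fin 2) (Fin 2) ℂ) 2 :=
  ⟨Matrix.isHermitian_one, one_mul 1, by simp⟩

lemma Emon_eq_half (k : Fin 3 → ℕ)
    (hub : ∀ Γ : Fin 3 → Matrix (Fin 2) (Fin 2) ℂ,
      (∀ i, IsProjOfRank (Γ i) (k i)) → nsq (applyLocal Γ GHZ) ≤ 1/2)
    (hmem : ∃ Γ : Fin 3 → Matrix (Fin 2) (Fin 2) ℂ,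
      (∀ i, IsProjOfRank (Γ i) (k i)) ∧ nsq (applyLocal Γ GHZ) = 1/2) :
    Emon k GHZ = 1/2 := by
  obtain ⟨Γ₀, hΓ₀, hv⟩ := hmem
  have hmem' : (1/2 : ℝ) ∈ {x | ∃ Γ : Fin 3 → Matrix (Fin 2) (Fin 2) ℂ,
      (∀ i, IsProjOfRank (Γ i) (k i)) ∧ x = nsq (applyLocal Γ GHZ)} := ⟨Γ₀, hΓ₀, hv.symm⟩
  apply le_antisymm
  · apply csSup_le ⟨_, hmem'⟩
    rintro x ⟨Γ, hΓ, rfl⟩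
    exact hub Γ hΓ
  · exact le_csSup ⟨1/2, by rintro x ⟨Γ, hΓ, rfl⟩; exact hub Γ hΓ⟩ hmem'

lemma E211 : Emon ![2, 1, 1] GHZ = 1/2 := by
  apply Emon_eq_half
  · intro Γ hΓ
    have hA := proj_rank_two (by simpa using hΓ 0)
    obtain ⟨q, β, hq0, hq1, hβ, hB⟩ := proj_rank_one (by simpa using hΓ 1)
    obtain ⟨r, γ, hr0, hr1, hγ, hC⟩ := proj_rank_one (by simpa using hΓ 2)
    have hΓeq : Γ = ![Mm 1 1 0, Mm q (1-q) β, Mm r (1-r) γ] := by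
      funext i
      fin_cases i
      · simpa using hA.trans id_eq_Mm
      · simpa using hB
      · simpa using hC
    rw [hΓeq, eval, hβ, hγ]
    norm_num
    nlinarith [mul_nonneg hq0 hr0, mul_nonneg (sub_nonneg.mpr hq1) (sub_nonneg.mpr hr1)]
  · refine ⟨![Mm 1 1 0, Mm 1 0 0, Mm 1 0 0], ?_, ?_⟩
    · intro i
      fin_cases i
      · exact (by simpa [← id_eq_Mm] using id_proj : IsProjOfRank (Mm 1 1 0) 2)
      · exact D1_proj
      · exact D1_proj
    · rw [eval]; norm_num

lemma E121 : Emon ![1, 2, 1] GHZ = 1/2 := by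
  apply Emon_eq_half
  · intro Γ hΓ
    obtain ⟨p, α, hp0, hp1, hα, hA⟩ := proj_rank_one (by simpa using hΓ 0)
    have hB := proj_rank_two (by simpa using hΓ 1)
    obtain ⟨r, γ, hr0, hr1, hγ, hC⟩ := proj_rank_one (by simpa using hΓ 2)
    have hΓeq : Γ = ![Mm p (1-p) α, Mm 1 1 0, Mm r (1-r) γ] := by
      funext i
      fin_cases i
      · simpa using hA
      · simpa using hB.trans id_eq_Mm
      · simpa using hC
    rw [hΓeq, eval, hα, hγ]
    norm_num
    nlinarith [mul_nonneg hp0 hr0, mul_nonneg (sub_nonneg.mpr hp1) (sub_nonneg.mpr hr1)]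
  · refine ⟨![Mm 1 0 0, Mm 1 1 0, Mm 1 0 0], ?_, ?_⟩
    · intro i
      fin_cases i
      · exact D1_proj
      · exact (by simpa [← id_eq_Mm] using id_proj : IsProjOfRank (Mm 1 1 0) 2)
      · exact D1_proj
    · rw [eval]; norm_num

lemma E112 : Emon ![1, 1, 2] GHZ = 1/2 := by
  apply Emon_eq_half
  · intro Γ hΓ
    obtain ⟨p, α, hp0, hp1, hα, hA⟩ := proj_rank_one (by simpa using hΓ 0)
    obtain ⟨q, β, hq0, hq1, hβ, hB⟩ := proj_rank_one (by simpa using hΓ 1)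
    have hC := proj_rank_two (by simpa using hΓ 2)
    have hΓeq : Γ = ![Mm p (1-p) α, Mm q (1-q) β, Mm 1 1 0] := by
      funext i
      fin_cases i
      · simpa using hA
      · simpa using hB
      · simpa using hC.trans id_eq_Mm
    rw [hΓeq, eval, hα, hβ]
    norm_num
    nlinarith [mul_nonneg hp0 hq0, mul_nonneg (sub_nonneg.mpr hp1) (sub_nonneg.mpr hq1)]
  · refine ⟨![Mm 1 0 0, Mm 1 0 0, Mm 1 1 0], ?_, ?_⟩
    · intro i
      fin_cases i
      · exact D1_proj
      · exact D1_proj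
      · exact (by simpa [← id_eq_Mm] using id_proj : IsProjOfRank (Mm 1 1 0) 2)
    · rw [eval]; norm_num

lemma E221 : Emon ![2, 2, 1] GHZ = 1/2 := by
  apply Emon_eq_half
  · intro Γ hΓ
    have hA := proj_rank_two (by simpa using hΓ 0)
    have hB := proj_rank_two (by simpa using hΓ 1)
    obtain ⟨r, γ, hr0, hr1, hγ, hC⟩ := proj_rank_one (by simpa using hΓ 2)
    have hΓeq : Γ = ![Mm 1 1 0, Mm 1 1 0, Mm r (1-r) γ] := by
      funext i
      fin_cases i
      · simpa using hA.trans id_eq_Mm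
      · simpa using hB.trans id_eq_Mm
      · simpa using hC
    rw [hΓeq, eval, hγ]
    norm_num
    nlinarith []
  · refine ⟨![Mm 1 1 0, Mm 1 1 0, Mm 1 0 0], ?_, ?_⟩
    · intro i
      fin_cases i
      · exact (by simpa [← id_eq_Mm] using id_proj : IsProjOfRank (Mm 1 1 0) 2)
      · exact (by simpa [← id_eq_Mm] using id_proj : IsProjOfRank (Mm 1 1 0) 2)
      · exact D1_proj
    · rw [eval]; norm_num

lemma E111 : Emon ![1, 1, 1] GHZ = 1/2 := by
  apply Emon_eq_half
  · intro Γ hΓ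
    obtain ⟨p, α, hp0, hp1, hα, hA⟩ := proj_rank_one (by simpa using hΓ 0)
    obtain ⟨q, β, hq0, hq1, hβ, hB⟩ := proj_rank_one (by simpa using hΓ 1)
    obtain ⟨r, γ, hr0, hr1, hγ, hC⟩ := proj_rank_one (by simpa using hΓ 2)
    have hΓeq : Γ = ![Mm p (1-p) α, Mm q (1-q) β, Mm r (1-r) γ] := by
      funext i
      fin_cases i
      · simpa using hA
      · simpa using hB
      · simpa using hC
    rw [hΓeq, eval, hα, hβ, hγ]
    set t := (α*β*γ).re with htdef
    have ht : t^2 ≤ (p*q)*((1-p)*(1-q))*r*(1-r) := by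
      have h1 : t^2 ≤ Complex.normSq (α*β*γ) := re_sq_le_normSq _
      rw [Complex.normSq_mul, Complex.normSq_mul, hα, hβ, hγ] at h1
      nlinarith [h1]
    have hXY : p*q + (1-p)*(1-q) ≤ 1 := by nlinarith
    have hk := key_ineq (p*q) ((1-p)*(1-q)) r t (mul_nonneg hp0 hq0)
      (mul_nonneg (sub_nonneg.mpr hp1) (sub_nonneg.mpr hq1)) hXY hr0 hr1 ht
    nlinarith [hk]
  · refine ⟨![Mm 1 0 0, Mm 1 0 0, Mm 1 0 0], ?_, ?_⟩
    · intro i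
      fin_cases i <;> exact D1_proj
    · rw [eval]; norm_num


/-- for the GHZ state, E_{2,1,1} = E_{1,2,1} = E_{1,1,2} = 1/2,
E_{1,1,1} = 1/2, and E_{2,2,1} = 1/2. -/
theorem Emon_GHZ :
    Emon ![2, 1, 1] GHZ = 1 / 2 ∧ Emon ![1, 2, 1] GHZ = 1 / 2 ∧
    Emon ![1, 1, 2] GHZ = 1 / 2 ∧ Emon ![1, 1, 1] GHZ = 1 / 2 ∧
    Emon ![2, 2, 1] GHZ = 1 / 2 := by
  exact ⟨E211, E121, E112, E111, E221⟩
end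

section
/- (Generalized von Neumann trace inequality) For linear operators A, B, C, ..., G on ℂ^d, the maximum over unitaries U, V, W, ..., Z of |tr(A U B V C W ⋯ G Z)| equals Σ_j σ_j(A)σ_j(B)σ_j(C)⋯σ_j(G), where σ_j(X) are the decreasingly ordered singular values of X. -/
/-!
Singular value decompositions `A i = P i * Σ i * Q i` let the unitaries `P i`, `Q i` be absorbed
into the free unitaries (cyclically: the last `P` passes through the trace), so only diagonal
`Σ i = diagonal (σ i)` with decreasing nonnegative entries matter; there all unitaries equal to
`1` attain `∑ j, ∏ i, σ i j`. For the upper bound, write each `Σ i` as a nonnegative combination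
of the coordinate projections onto the first `k + 1` coordinates (a layer-cake decomposition)
and expand the product multilinearly. In each resulting term, rotate the trace so that the
projection of smallest rank `r` comes first: the trace of a rank-`r` coordinate projection times
a contraction has modulus at most `r`, and summing these bounds against the layer weights gives
back `∑ j, ∏ i, σ i j`.
-/

open scoped ComplexOrder Matrix

/-- The decreasingly ordered singular values of a matrix: the eigenvalues of √(AAᴴ). -/
noncomputable def singVals {d : ℕ} (A : Matrix (Fin d) (Fin d) ℂ) : Fin d → ℝ :=
  sortedDesc fun i =>
    Real.sqrt ((Matrix.posSemidef_self_mul_conjTranspose A).1.eigenvalues i)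

open Matrix Finset

theorem List.prod_ofFn_unitary_conj_telescope {M : Type*} [Monoid M] [StarMul M] {m : ℕ}
    (P : ℕ → unitary M) (X : Fin m → M) :
    (List.ofFn fun i : Fin m => (P i : M) * X i * star (P (i + 1) : M)).prod
      = P 0 * (List.ofFn X).prod * star (P m : M) := by
  induction m generalizing P with
  | zero => simp
  | succ m ih =>
    rw [List.ofFn_succ, List.prod_cons, List.ofFn_succ, List.prod_cons]
    simp only [Fin.val_succ, Fin.val_zero]
    rw [ih (fun n => P (n + 1)) (fun i => X i.succ)]
    simp [mul_assoc, ← mul_assoc (star (P 1 : M))]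

theorem List.prod_ofFn_sum {R κ : Type*} [Semiring R] [Fintype κ] {m : ℕ}
    (f : Fin m → κ → R) :
    (List.ofFn fun i => ∑ k, f i k).prod
      = ∑ g : Fin m → κ, (List.ofFn fun i => f i (g i)).prod := by
  induction m with
  | zero => simp
  | succ m ih =>
    rw [List.ofFn_succ, List.prod_cons, ih, Finset.sum_mul_sum,
      ← (Fin.consEquiv fun _ => κ).sum_comp, Fintype.sum_prod_type]
    simp [List.ofFn_succ]

theorem List.prod_ofFn_smul {S R : Type*} [CommSemiring S] [Semiring R] [Algebra S R] {m : ℕ}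
    (c : Fin m → S) (X : Fin m → R) :
    (List.ofFn fun i => c i • X i).prod = (∏ i, c i) • (List.ofFn X).prod := by
  induction m with
  | zero => simp
  | succ m ih =>
    simp only [List.ofFn_succ, List.prod_cons, ih, Fin.prod_univ_succ, mul_smul_comm,
      smul_mul_assoc, smul_smul, mul_comm]

theorem CStarRing.norm_list_prod_le_one {E : Type*} [NormedRing E] [StarRing E] [CStarRing E]
    {L : List E} (hL : ∀ X ∈ L, ‖X‖ ≤ 1) : ‖L.prod‖ ≤ 1 := by
  induction L with
  | nil => exact (IsStarProjection.one E).norm_le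
  | cons X L ih =>
    simp only [List.mem_cons, forall_eq_or_imp] at hL
    rw [List.prod_cons]
    exact (norm_mul_le _ _).trans (mul_le_one₀ hL.1 (norm_nonneg _) (ih hL.2))

/-- The weights of the layer-cake decomposition `σ j = ∑ k ≥ j, layerWeight σ k`. -/
def layerWeight {d : ℕ} (σ : Fin d → ℝ) (k : ℕ) : ℝ :=
  (if h : k < d then σ ⟨k, h⟩ else 0) - (if h : k + 1 < d then σ ⟨k + 1, h⟩ else 0)

theorem layerWeight_nonneg {d : ℕ} {σ : Fin d → ℝ} (hσ : Antitone σ) (h0 : ∀ j, 0 ≤ σ j)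
    (k : ℕ) : 0 ≤ layerWeight σ k := by
  unfold layerWeight
  split_ifs with h h'
  · exact sub_nonneg.2 (hσ (Fin.mk_le_mk.2 k.le_succ))
  · simpa using h0 _
  · omega
  · simp

theorem sum_layerWeight_mul_ite {d : ℕ} (σ : Fin d → ℝ) (j : Fin d) :
    ∑ k : Fin d, layerWeight σ k * (if j ≤ k then 1 else 0) = σ j := by
  let f (k : ℕ) : ℝ := if h : k < d then σ ⟨k, h⟩ else 0
  simp only [mul_ite, mul_one, mul_zero, Fin.le_def]
  rw [Fin.sum_univ_eq_sum_range (fun k => if (j : ℕ) ≤ k then layerWeight σ k else 0),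
    ← sum_filter]
  have hfilter : (range d).filter (fun k => (j : ℕ) ≤ k) = Ico (j : ℕ) d := by
    ext k
    simp [and_comm]
  have htel : ∑ k ∈ Ico (j : ℕ) d, (f (k + 1) - f k) = -σ j := by
    rw [sum_Ico_sub f j.isLt.le]
    simp [f]
  rw [hfilter, ← neg_neg (σ j), ← htel, ← sum_neg_distrib]
  exact sum_congr rfl fun k _ => (neg_sub _ _).symm

namespace Matrix

section Unitary

variable {n α : Type*} [Fintype n] [DecidableEq n]

theorem exists_trace_list_prod_eq_trace_mul [CommSemiring α] {L : List (Matrix n n α)}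
    {X : Matrix n n α} (hX : X ∈ L) :
    ∃ R : List (Matrix n n α), (∀ Y ∈ R, Y ∈ L) ∧ trace L.prod = trace (X * R.prod) := by
  obtain ⟨s, t, rfl⟩ := List.append_of_mem hX
  refine ⟨t ++ s, fun Y hY => ?_, ?_⟩
  · simp only [List.mem_append, List.mem_cons] at hY ⊢
    tauto
  · rw [List.prod_append, List.prod_cons, trace_mul_comm, List.prod_append, mul_assoc]

variable [CommRing α] [StarRing α]

open Fin.NatCast in
theorem trace_prod_ofFn_unitary_conj_finRotate {m : ℕ} (P : Fin m → unitaryGroup n α)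
    (X : Fin m → Matrix n n α) :
    trace (List.ofFn fun i =>
        (P i : Matrix n n α) * X i * star (P (finRotate m i) : Matrix n n α)).prod
      = trace (List.ofFn X).prod := by
  cases m with
  | zero => simp
  | succ m =>
    have key := List.prod_ofFn_unitary_conj_telescope (fun k : ℕ => P (k : Fin (m + 1))) X
    simp only [Fin.cast_val_eq_self, Nat.cast_add, Nat.cast_one, Nat.cast_zero,
      Fin.natCast_eq_last, Fin.last_add_one] at key
    simp only [finRotate_apply, key]
    rw [trace_mul_cycle, Unitary.coe_star_mul_self, one_mul]

theorem submatrix_id_equiv_mem_unitaryGroup {W : Matrix n n α} (hW : W ∈ unitaryGroup n α)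
    (e : n ≃ n) : W.submatrix id e ∈ unitaryGroup n α := by
  rw [mem_unitaryGroup_iff, star_eq_conjTranspose, conjTranspose_submatrix,
    submatrix_mul_equiv W Wᴴ id e id, ← star_eq_conjTranspose, mem_unitaryGroup_iff.1 hW,
    submatrix_id_id]

end Unitary

variable {𝕜 n : Type*} [RCLike 𝕜] [Fintype n] [DecidableEq n]

open scoped Matrix.Norms.L2Operator in
theorem norm_apply_le_l2_opNorm (Z : Matrix n n 𝕜) (i j : n) : ‖Z i j‖ ≤ ‖Z‖ := by
  have h := l2_opNorm_mulVec Z (PiLp.single 2 j (1 : 𝕜))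
  rw [PiLp.norm_single, norm_one, mul_one] at h
  refine le_trans (le_of_eq ?_) ((PiLp.norm_apply_le _ i).trans h)
  simp [PiLp.ofLp_single]

/-- The rows of `M` are orthogonal with norms `|σ j|`; normalize the nonzero ones and complete
them to an orthonormal basis, which forms the rows of `Q`. -/
theorem exists_unitary_eq_diagonal_mul {M : Matrix n n 𝕜} {σ : n → ℝ}
    (hM : M * Mᴴ = diagonal fun j => ((σ j ^ 2 : ℝ) : 𝕜)) :
    ∃ Q ∈ unitaryGroup n 𝕜, M = diagonal (fun j => (σ j : 𝕜)) * Q := by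
  let r (j : n) : EuclideanSpace 𝕜 n := WithLp.toLp 2 (M j)
  have hr (j k : n) : inner 𝕜 (r j) (r k) = if j = k then ((σ j ^ 2 : ℝ) : 𝕜) else 0 := by
    have : inner 𝕜 (r j) (r k) = (M * Mᴴ) k j := by
      simp [r, EuclideanSpace.inner_toLp_toLp, mul_apply, dotProduct]
    rw [this, hM, diagonal_apply]
    by_cases hjk : j = k
    · simp [hjk]
    · simp [hjk, Ne.symm hjk]
  let u (j : n) : EuclideanSpace 𝕜 n := ((σ j : 𝕜))⁻¹ • r j
  have hu : Orthonormal 𝕜 ({j | σ j ≠ 0}.domRestrict u) := by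
    rw [orthonormal_iff_ite]
    rintro ⟨j, hj⟩ ⟨k, hk⟩
    change inner 𝕜 (u j) (u k) = _
    simp only [u, inner_smul_left, inner_smul_right, hr, Subtype.mk.injEq]
    split_ifs with hjk
    · subst hjk
      have hσ : (σ j : 𝕜) ≠ 0 := RCLike.ofReal_ne_zero.2 hj
      simp only [map_inv₀, RCLike.conj_ofReal, RCLike.ofReal_pow]
      field_simp
    · simp
  obtain ⟨b, hb⟩ := hu.exists_orthonormalBasis_extension_of_card_eq (by simp)
  refine ⟨((EuclideanSpace.basisFun n 𝕜).toBasis.toMatrix b)ᵀ, transpose_mem_unitaryGroup_iff.2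
    ((EuclideanSpace.basisFun n 𝕜).toMatrix_orthonormalBasis_mem_unitary b), ?_⟩
  ext j k
  rw [diagonal_mul]
  by_cases hj : σ j = 0
  · have : r j = 0 := by
      rw [← inner_self_eq_zero (𝕜 := 𝕜), hr]
      simp [hj]
    simpa [hj] using congrArg (fun x : EuclideanSpace 𝕜 n => x k) this
  · simp [Module.Basis.toMatrix_apply, hb j hj, u, r, hj]

variable {m : ℕ}

def traceNormValues (A : Fin m → Matrix n n 𝕜) : Set ℝ :=
  {x | ∃ U : Fin m → Matrix n n 𝕜, (∀ i, U i ∈ unitaryGroup n 𝕜) ∧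
    x = ‖trace (List.ofFn fun i => A i * U i).prod‖}

theorem traceNormValues_unitary_mul_mul_subset (A : Fin m → Matrix n n 𝕜)
    (P Q : Fin m → unitaryGroup n 𝕜) :
    traceNormValues (fun i => (P i : Matrix n n 𝕜) * A i * (Q i : Matrix n n 𝕜))
      ⊆ traceNormValues A := by
  rintro x ⟨U, hU, rfl⟩
  refine ⟨fun i => (Q i : Matrix n n 𝕜) * U i * (P (finRotate m i) : Matrix n n 𝕜),
    fun i => mul_mem (mul_mem (Q i).2 (hU i)) (P _).2, ?_⟩
  have hP (i : Fin m) : (P i : Matrix n n 𝕜) * star (P i : Matrix n n 𝕜) = 1 :=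
    Unitary.mul_star_self_of_mem (P i).2
  conv_rhs => rw [← trace_prod_ofFn_unitary_conj_finRotate P]
  simp only [mul_assoc, hP, mul_one]

theorem traceNormValues_unitary_mul_mul (A : Fin m → Matrix n n 𝕜)
    (P Q : Fin m → unitaryGroup n 𝕜) :
    traceNormValues (fun i => (P i : Matrix n n 𝕜) * A i * (Q i : Matrix n n 𝕜))
      = traceNormValues A := by
  refine (traceNormValues_unitary_mul_mul_subset A P Q).antisymm ?_
  have hA : (fun i => ((star P) i : Matrix n n 𝕜)
      * ((P i : Matrix n n 𝕜) * A i * (Q i : Matrix n n 𝕜)) * ((star Q) i : Matrix n n 𝕜)) = A := by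
    ext1 i
    simp only [Pi.star_apply, Unitary.coe_star, ← mul_assoc, Unitary.coe_star_mul_self, one_mul]
    rw [mul_assoc, Unitary.mul_star_self_of_mem (Q i).2, mul_one]
  have h := traceNormValues_unitary_mul_mul_subset
    (fun i => (P i : Matrix n n 𝕜) * A i * (Q i : Matrix n n 𝕜)) (star P) (star Q)
  rwa [hA] at h

section Diagonal

variable {d : ℕ}

def projIic (k : Fin d) : Matrix (Fin d) (Fin d) 𝕜 := diagonal fun j => if j ≤ k then 1 else 0

theorem isStarProjection_projIic (k : Fin d) : IsStarProjection (projIic (𝕜 := 𝕜) k) := by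
  constructor
  · simp [IsIdempotentElem, projIic, diagonal_mul_diagonal]
  · simp [IsSelfAdjoint, projIic, star_eq_conjTranspose, diagonal_conjTranspose]

theorem diagonal_eq_sum_layerWeight_smul_projIic (σ : Fin d → ℝ) :
    diagonal (fun j => (σ j : 𝕜)) = ∑ k : Fin d, layerWeight σ k • projIic k := by
  ext i j
  rcases eq_or_ne i j with rfl | hij
  · simp [projIic, Matrix.sum_apply, ← sum_layerWeight_mul_ite σ i,
      Algebra.algebraMap_eq_smul_one, sum_smul, ite_smul]
  · simp [projIic, Matrix.sum_apply, hij]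

open scoped Matrix.Norms.L2Operator

theorem norm_trace_projIic_mul_le (k : Fin d) {Z : Matrix (Fin d) (Fin d) 𝕜} (hZ : ‖Z‖ ≤ 1) :
    ‖trace (projIic k * Z)‖ ≤ ∑ j, if j ≤ k then (1 : ℝ) else 0 := by
  simp only [trace, projIic, diag_apply, diagonal_mul, ite_mul, one_mul, zero_mul]
  refine (norm_sum_le _ _).trans (sum_le_sum fun j _ => ?_)
  split_ifs
  · exact (norm_apply_le_l2_opNorm Z j j).trans hZ
  · simp

theorem norm_trace_prod_projIic_mul_le (g : Fin m → Fin d)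
    {V : Fin m → Matrix (Fin d) (Fin d) 𝕜} (hV : ∀ i, V i ∈ unitaryGroup (Fin d) 𝕜) :
    ‖trace (List.ofFn fun i => projIic (g i) * V i).prod‖
      ≤ ∑ j, ∏ i, if j ≤ g i then (1 : ℝ) else 0 := by
  cases m with
  | zero => simp [trace_one]
  | succ m =>
    obtain ⟨i₀, -, hi₀⟩ := exists_min_image univ g univ_nonempty
    obtain ⟨R, hR, htr⟩ := exists_trace_list_prod_eq_trace_mul
      ((List.mem_ofFn' (fun i => projIic (g i) * V i) _).2 ⟨i₀, rfl⟩)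
    have hRnorm : ‖R.prod‖ ≤ 1 := CStarRing.norm_list_prod_le_one fun Y hY => by
      obtain ⟨i, rfl⟩ := (List.mem_ofFn' _ _).1 (hR Y hY)
      rw [CStarRing.norm_mul_mem_unitary _ (hV i)]
      exact (isStarProjection_projIic _).norm_le
    calc ‖trace (List.ofFn fun i => projIic (g i) * V i).prod‖
        = ‖trace (projIic (g i₀) * (V i₀ * R.prod))‖ := by rw [htr, mul_assoc]
      _ ≤ ∑ j, if j ≤ g i₀ then (1 : ℝ) else 0 :=
        norm_trace_projIic_mul_le _ ((CStarRing.norm_mem_unitary_mul _ (hV i₀)).le.trans hRnorm)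
      _ = ∑ j, ∏ i, if j ≤ g i then (1 : ℝ) else 0 := by
        refine sum_congr rfl fun j _ => ?_
        by_cases hj : j ≤ g i₀
        · rw [if_pos hj, prod_eq_one fun i _ => if_pos (hj.trans (hi₀ i (mem_univ i)))]
        · rw [if_neg hj, prod_eq_zero (mem_univ i₀) (if_neg hj)]

theorem norm_trace_prod_diagonal_mul_le {σ : Fin m → Fin d → ℝ} (hσ : ∀ i, Antitone (σ i))
    (h0 : ∀ i j, 0 ≤ σ i j) {V : Fin m → Matrix (Fin d) (Fin d) 𝕜}
    (hV : ∀ i, V i ∈ unitaryGroup (Fin d) 𝕜) :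
    ‖trace (List.ofFn fun i => diagonal (fun j => (σ i j : 𝕜)) * V i).prod‖
      ≤ ∑ j, ∏ i, σ i j := by
  let c (g : Fin m → Fin d) : ℝ := ∏ i, layerWeight (σ i) (g i)
  have hc (g : Fin m → Fin d) : 0 ≤ c g :=
    prod_nonneg fun i _ => layerWeight_nonneg (hσ i) (h0 i) _
  have hexpand : (List.ofFn fun i => diagonal (fun j => (σ i j : 𝕜)) * V i).prod
      = ∑ g, c g • (List.ofFn fun i => projIic (g i) * V i).prod := by
    simp only [c, diagonal_eq_sum_layerWeight_smul_projIic, sum_mul, smul_mul_assoc,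
      List.prod_ofFn_sum, List.prod_ofFn_smul]
  calc ‖trace (List.ofFn fun i => diagonal (fun j => (σ i j : 𝕜)) * V i).prod‖
      ≤ ∑ g, ‖trace (c g • (List.ofFn fun i => projIic (g i) * V i).prod)‖ := by
        rw [hexpand, trace_sum]
        exact norm_sum_le _ _
    _ ≤ ∑ g, c g * ∑ j, ∏ i, if j ≤ g i then (1 : ℝ) else 0 := by
        gcongr with g
        rw [trace_smul, norm_smul, Real.norm_of_nonneg (hc g)]
        exact mul_le_mul_of_nonneg_left (norm_trace_prod_projIic_mul_le g hV) (hc g)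
    _ = ∑ j, ∏ i, ∑ k : Fin d, layerWeight (σ i) k * if j ≤ k then 1 else 0 := by
        simp only [c, mul_sum, ← prod_mul_distrib, Fintype.prod_sum]
        exact sum_comm
    _ = ∑ j, ∏ i, σ i j := by simp only [sum_layerWeight_mul_ite]

theorem prod_ofFn_diagonal (v : Fin m → Fin d → 𝕜) :
    (List.ofFn fun i => diagonal (v i)).prod = diagonal fun j => ∏ i, v i j := by
  have hmap : (List.ofFn fun i => diagonal (v i))
      = (List.ofFn v).map (diagonalRingHom (Fin d) 𝕜) := by
    simp [List.map_ofFn, Function.comp_def]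
  rw [hmap, ← map_list_prod, Fin.prod_ofFn]
  simp [Finset.prod_apply]

theorem isGreatest_traceNormValues_diagonal {σ : Fin m → Fin d → ℝ}
    (hσ : ∀ i, Antitone (σ i)) (h0 : ∀ i j, 0 ≤ σ i j) :
    IsGreatest (traceNormValues fun i => diagonal fun j => (σ i j : 𝕜)) (∑ j, ∏ i, σ i j) := by
  refine ⟨⟨1, fun _ => one_mem _, ?_⟩, ?_⟩
  · simp only [Pi.one_apply, mul_one, prod_ofFn_diagonal, trace_diagonal]
    norm_cast
    exact (abs_of_nonneg (sum_nonneg fun j _ => prod_nonneg fun i _ => h0 i j)).symm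
  · rintro x ⟨V, hV, rfl⟩
    exact norm_trace_prod_diagonal_mul_le hσ h0 hV

end Diagonal

end Matrix

theorem singVals_nonneg {d : ℕ} (A : Matrix (Fin d) (Fin d) ℂ) (j : Fin d) : 0 ≤ singVals A j :=
  Real.sqrt_nonneg _

theorem singVals_antitone {d : ℕ} (A : Matrix (Fin d) (Fin d) ℂ) : Antitone (singVals A) := by
  intro i j hij
  unfold singVals sortedDesc
  exact Tuple.monotone_sort _ (Fin.rev_le_rev.2 hij)

theorem exists_unitary_mul_conjTranspose_eq_singVals {d : ℕ} (A : Matrix (Fin d) (Fin d) ℂ) :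
    ∃ W ∈ unitaryGroup (Fin d) ℂ,
      A * Aᴴ = W * diagonal (fun j => ((singVals A j ^ 2 : ℝ) : ℂ)) * Wᴴ := by
  have hA := posSemidef_self_mul_conjTranspose A
  let ρ : Equiv.Perm (Fin d) := Fin.revPerm.trans (Tuple.sort fun i => √(hA.1.eigenvalues i))
  have hσ (j : Fin d) : singVals A j ^ 2 = hA.1.eigenvalues (ρ j) :=
    Real.sq_sqrt (hA.eigenvalues_nonneg _)
  let U : Matrix (Fin d) (Fin d) ℂ := hA.1.eigenvectorUnitary
  refine ⟨U.submatrix id ρ, submatrix_id_equiv_mem_unitaryGroup hA.1.eigenvectorUnitary.2 ρ, ?_⟩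
  have hdiag : diagonal (fun j => ((singVals A j ^ 2 : ℝ) : ℂ))
      = (diagonal (RCLike.ofReal ∘ hA.1.eigenvalues)).submatrix ρ ρ := by
    rw [submatrix_diagonal_equiv]
    simp [hσ]
  rw [hdiag, conjTranspose_submatrix, submatrix_mul_equiv _ _ id ρ ρ,
    submatrix_mul_equiv _ _ id ρ id, submatrix_id_id]
  conv_lhs => rw [hA.1.spectral_theorem]
  rfl

theorem exists_unitary_mul_diagonal_singVals_mul {d : ℕ} (A : Matrix (Fin d) (Fin d) ℂ) :
    ∃ P Q : unitaryGroup (Fin d) ℂ,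
      A = (P : Matrix (Fin d) (Fin d) ℂ) * diagonal (fun j => (singVals A j : ℂ)) * Q := by
  obtain ⟨W, hW, hAA⟩ := exists_unitary_mul_conjTranspose_eq_singVals A
  have hWW : Wᴴ * W = 1 := mem_unitaryGroup_iff'.1 hW
  have hWW' : W * Wᴴ = 1 := mem_unitaryGroup_iff.1 hW
  obtain ⟨Q, hQ, hM⟩ := exists_unitary_eq_diagonal_mul (M := Wᴴ * A) (σ := singVals A) (by
    rw [conjTranspose_mul, conjTranspose_conjTranspose, mul_assoc, ← mul_assoc A, hAA]
    simp only [← mul_assoc, hWW, one_mul]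
    simp only [mul_assoc, hWW, mul_one]
    rfl)
  refine ⟨⟨W, hW⟩, ⟨Q, hQ⟩, ?_⟩
  calc A = W * (Wᴴ * A) := by rw [← mul_assoc, hWW', one_mul]
    _ = W * diagonal (fun j => (singVals A j : ℂ)) * Q := by rw [hM, mul_assoc]; rfl

/-- the generalized von Neumann trace inequality:
max over unitaries U, V, …, Z of |tr(A U B V ⋯ G Z)| = Σ_j σ_j(A)σ_j(B)⋯σ_j(G). -/
theorem generalized_vonNeumann_trace
    {d m : ℕ} (A : Fin m → Matrix (Fin d) (Fin d) ℂ) :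
    IsGreatest {x : ℝ | ∃ U : Fin m → Matrix (Fin d) (Fin d) ℂ,
        (∀ i, U i ∈ Matrix.unitaryGroup (Fin d) ℂ) ∧
        x = ‖Matrix.trace ((List.ofFn (fun i => A i * U i)).prod)‖}
      (∑ j, ∏ i, singVals (A i) j) := by
  choose P Q hA using fun i => exists_unitary_mul_diagonal_singVals_mul (A i)
  have hvalues : traceNormValues A
      = traceNormValues fun i => diagonal fun j => (singVals (A i) j : ℂ) := by
    rw [← traceNormValues_unitary_mul_mul
      (fun i => diagonal fun j => (singVals (A i) j : ℂ)) P Q]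
    exact congrArg traceNormValues (funext hA)
  change IsGreatest (traceNormValues A) _
  rw [hvalues]
  exact isGreatest_traceNormValues_diagonal (fun i => singVals_antitone (A i))
    (fun i => singVals_nonneg (A i))
end
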